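/- Symmetry identity for generalized Euler polynomials (order 1): for all n ≥ 0 and all x, ∑_{j=0}^{n} C(n,j) w₂^j w₁^{n−j} E_{n−j,χ}(w₂ x) T_{j,χ}(w₁ d − 1) = ∑_{j=0}^{n} C(n,j) w₁^j w₂^{n−j} E_{n−j,χ}(w₁ x) T_{j,χ}(w₂ d − 1). -/

import Mathlib

open PowerSeries Finset

/-- Generating function `2 ∑_{a<d} (-1)^a χ(a) e^{at} / (e^{dt}+1)` as a formal power series. -/
noncomputable def genEulerSeries (d : ℕ) (χ : DirichletCharacter ℂ d) : PowerSeries ℂ :=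
  (2 * ∑ a ∈ Finset.range d, ((-1 : ℂ) ^ a * χ (a : ZMod d)) •
      PowerSeries.rescale (a : ℂ) (PowerSeries.exp ℂ)) *
    (PowerSeries.rescale (d : ℂ) (PowerSeries.exp ℂ) + 1)⁻¹

/-- Generalized higher-order Euler polynomial `E_{n,χ}^{(m)}(x)`: `n!` times the `n`-th
coefficient of `(genEulerSeries d χ)^m * e^{xt}`. -/
noncomputable def genEuler (d : ℕ) (χ : DirichletCharacter ℂ d) (m n : ℕ) (x : ℂ) : ℂ :=
  (n.factorial : ℂ) *
    PowerSeries.coeff n ((genEulerSeries d χ) ^ m * PowerSeries.rescale x (PowerSeries.exp ℂ))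

/-- Alternating power sum `T_{k,χ}(m) = ∑_{l=0}^{m} (-1)^l χ(l) l^k`. -/
noncomputable def altPowerSum (d : ℕ) (χ : DirichletCharacter ℂ d) (k m : ℕ) : ℂ :=
  ∑ l ∈ Finset.range (m + 1), (-1 : ℂ) ^ l * χ (l : ZMod d) * (l : ℂ) ^ k

/-!
Write `A(t) = ∑_{a<d} (-1)^a χ(a) e^{at}` and `S_m(t) = ∑_{l<m} (-1)^l χ(l) e^{lt}`. Since `d` is
odd, the block of indices `[kd, kd + d)` contributes `(-e^{dt})^k A(t)` to `S_{wd}`, so a geometric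
sum gives `S_{wd}(t) (e^{dt} + 1) = A(t) (e^{wdt} + 1)` for odd `w`. The left side of the identity
is `n!` times the `n`-th coefficient of `S_{w₁d}(w₂t) · 2A(w₁t)/(e^{w₁dt} + 1) · e^{w₁w₂xt}`, which
therefore equals
`2 A(w₁t) A(w₂t) (e^{w₁w₂dt} + 1) e^{w₁w₂xt} / ((e^{w₁dt} + 1)(e^{w₂dt} + 1))`,
symmetric in `w₁` and `w₂`.
-/

section ExpSeries

variable {A : Type*} [CommRing A]

theorem factorial_mul_coeff_mul (f g : A⟦X⟧) (n : ℕ) :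
    (n.factorial : A) * coeff n (f * g) = ∑ j ∈ range (n + 1), (n.choose j : A) *
      ((j.factorial : A) * coeff j f) * (((n - j).factorial : A) * coeff (n - j) g) := by
  rw [coeff_mul, Nat.sum_antidiagonal_eq_sum_range_succ_mk, mul_sum]
  refine sum_congr rfl fun j hj => ?_
  rw [← Nat.choose_mul_factorial_mul_factorial (Nat.lt_succ_iff.mp (mem_range.mp hj))]
  push_cast
  ring

variable [Algebra ℚ A]

theorem factorial_mul_coeff_rescale_exp (c : A) (j : ℕ) :
    (j.factorial : A) * coeff j (rescale c (exp A)) = c ^ j := by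
  have h : (j.factorial : ℚ) * (1 / j.factorial) = 1 := by
    field_simp
  rw [coeff_rescale, coeff_exp, mul_left_comm, ← map_natCast (algebraMap ℚ A), ← map_mul, h,
    map_one, mul_one]

theorem rescale_exp_pow (c : A) (k : ℕ) : rescale c (exp A) ^ k = rescale (k * c) (exp A) := by
  rw [← map_pow, exp_pow_eq_rescale_exp, rescale_rescale]

theorem rescale_rescale_exp_add_one (a b : A) :
    rescale b (rescale a (exp A) + 1) = rescale (a * b) (exp A) + 1 := by
  rw [map_add, map_one, rescale_rescale]

end ExpSeries

theorem constantCoeff_rescale_exp_add_one (c : ℂ) :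
    constantCoeff (rescale c (exp ℂ) + 1) = 2 := by
  rw [← coeff_zero_eq_constantCoeff_apply, map_add, coeff_rescale, coeff_exp]
  norm_num

theorem rescale_exp_add_one_ne_zero (c : ℂ) : rescale c (exp ℂ) + 1 ≠ 0 := fun h => by
  simpa [h] using constantCoeff_rescale_exp_add_one c

section AltExpSum

variable {d : ℕ} (χ : DirichletCharacter ℂ d)

noncomputable def altChar (l : ℕ) : ℂ := (-1) ^ l * χ l

theorem altChar_mul_add (hd : Odd d) (k a : ℕ) :
    altChar χ (k * d + a) = (-1) ^ k * altChar χ a := by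
  have hχ : χ ((k * d + a : ℕ) : ZMod d) = χ a := by
    push_cast
    rw [ZMod.natCast_self, mul_zero, zero_add]
  rw [altChar, altChar, hχ, pow_add, pow_mul', hd.neg_one_pow]
  ring

noncomputable def altExpSum (m : ℕ) : ℂ⟦X⟧ :=
  ∑ l ∈ range m, altChar χ l • rescale (l : ℂ) (exp ℂ)

theorem genEulerSeries_mul_exp_add_one :
    genEulerSeries d χ * (rescale (d : ℂ) (exp ℂ) + 1) = 2 * altExpSum χ d := by
  rw [genEulerSeries, mul_assoc, PowerSeries.inv_mul_cancel, mul_one]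
  · rfl
  · simp [constantCoeff_rescale_exp_add_one]

theorem altExpSum_mul (hd : Odd d) (k : ℕ) :
    altExpSum χ (k * d) = altExpSum χ d * ∑ i ∈ range k, (-rescale (d : ℂ) (exp ℂ)) ^ i := by
  induction k with
  | zero => simp [altExpSum]
  | succ k ih =>
    have hblock : ∑ a ∈ range d, altChar χ (k * d + a) • rescale ((k * d + a : ℕ) : ℂ) (exp ℂ) =
        altExpSum χ d * (-rescale (d : ℂ) (exp ℂ)) ^ k := by
      rw [altExpSum, sum_mul]
      refine sum_congr rfl fun a _ => ?_
      rw [altChar_mul_add χ hd, neg_pow (rescale (d : ℂ) (exp ℂ)), rescale_exp_pow,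
        smul_eq_C_mul, smul_eq_C_mul, map_mul, map_pow, map_neg, map_one, Nat.cast_add,
        ← exp_mul_exp_eq_exp_add, Nat.cast_mul]
      ring
    rw [add_mul, one_mul, altExpSum, sum_range_add, ← altExpSum, ih, hblock, sum_range_succ,
      mul_add]

theorem altExpSum_mul_exp_add_one (hd : Odd d) {w : ℕ} (hw : Odd w) :
    altExpSum χ (w * d) * (rescale (d : ℂ) (exp ℂ) + 1) =
      altExpSum χ d * (rescale ((w * d : ℕ) : ℂ) (exp ℂ) + 1) := by
  have hgeom := geom_sum_mul (-rescale (d : ℂ) (exp ℂ) : ℂ⟦X⟧) w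
  rw [hw.neg_pow, rescale_exp_pow] at hgeom
  rw [altExpSum_mul χ hd, mul_assoc]
  push_cast
  linear_combination (-altExpSum χ d) * hgeom

theorem factorial_mul_coeff_rescale_altExpSum (v : ℂ) (m j : ℕ) :
    (j.factorial : ℂ) * coeff j (rescale v (altExpSum χ (m + 1))) =
      v ^ j * altPowerSum d χ j m := by
  rw [coeff_rescale]
  simp only [altExpSum, altPowerSum, map_sum, coeff_smul, smul_eq_mul, mul_sum, altChar]
  refine sum_congr rfl fun l _ => ?_
  linear_combination v ^ j * (-1) ^ l * χ l * factorial_mul_coeff_rescale_exp (l : ℂ) j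

noncomputable def symmetrySeries (x : ℂ) (u v : ℕ) : ℂ⟦X⟧ :=
  rescale (v : ℂ) (altExpSum χ (u * d)) *
    rescale (u : ℂ) (genEulerSeries d χ * rescale ((v : ℂ) * x) (exp ℂ))

theorem symmetrySeries_mul_eq (hd : Odd d) (x : ℂ) {u : ℕ} (hu : Odd u) (v : ℕ) :
    symmetrySeries χ x u v *
        ((rescale ((d : ℂ) * u) (exp ℂ) + 1) * (rescale ((d : ℂ) * v) (exp ℂ) + 1)) =
      2 * rescale (u : ℂ) (altExpSum χ d) * rescale (v : ℂ) (altExpSum χ d) *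
        (rescale ((u * v * d : ℕ) : ℂ) (exp ℂ) + 1) * rescale ((u * v : ℕ) * x) (exp ℂ) := by
  have hS := congrArg (rescale (v : ℂ)) (altExpSum_mul_exp_add_one χ hd hu)
  have hG := congrArg (rescale (u : ℂ)) (genEulerSeries_mul_exp_add_one χ)
  simp only [map_mul, map_ofNat, rescale_rescale_exp_add_one] at hS hG
  calc symmetrySeries χ x u v *
        ((rescale ((d : ℂ) * u) (exp ℂ) + 1) * (rescale ((d : ℂ) * v) (exp ℂ) + 1))
      = rescale (v : ℂ) (altExpSum χ (u * d)) * (rescale ((d : ℂ) * v) (exp ℂ) + 1) *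
          (rescale (u : ℂ) (genEulerSeries d χ) * (rescale ((d : ℂ) * u) (exp ℂ) + 1)) *
          rescale ((v : ℂ) * x * u) (exp ℂ) := by
        rw [symmetrySeries, map_mul, rescale_rescale]
        ring
    _ = _ := by
        rw [hS, hG]
        push_cast
        ring_nf

theorem symmetrySeries_comm (hd : Odd d) (x : ℂ) {u v : ℕ} (hu : Odd u) (hv : Odd v) :
    symmetrySeries χ x u v = symmetrySeries χ x v u := by
  refine mul_right_cancel₀ (mul_ne_zero (rescale_exp_add_one_ne_zero ((d : ℂ) * u))
    (rescale_exp_add_one_ne_zero ((d : ℂ) * v))) ?_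
  rw [symmetrySeries_mul_eq χ hd x hu, mul_comm (rescale ((d : ℂ) * u) (exp ℂ) + 1),
    symmetrySeries_mul_eq χ hd x hv, mul_comm v u]
  ring

theorem sum_choose_genEuler_altPowerSum (x : ℂ) {u v m : ℕ} (hm : m + 1 = u * d) (n : ℕ) :
    ∑ j ∈ range (n + 1), (n.choose j : ℂ) * (v : ℂ) ^ j * (u : ℂ) ^ (n - j) *
        genEuler d χ 1 (n - j) ((v : ℂ) * x) * altPowerSum d χ j m =
      (n.factorial : ℂ) * coeff n (symmetrySeries χ x u v) := by
  rw [symmetrySeries, ← hm, factorial_mul_coeff_mul]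
  refine sum_congr rfl fun j _ => ?_
  rw [factorial_mul_coeff_rescale_altExpSum, coeff_rescale, genEuler, pow_one]
  ring

end AltExpSum

theorem symmetry_order_one_general (d : ℕ) (hd : Odd d)
    (χ : DirichletCharacter ℂ d) (w₁ w₂ : ℕ) (hw₁ : Odd w₁)
    (hw₂ : Odd w₂) (n : ℕ) (x : ℂ) :
    ∑ j ∈ Finset.range (n + 1), (n.choose j : ℂ) * (w₂ : ℂ) ^ j * (w₁ : ℂ) ^ (n - j) *
        genEuler d χ 1 (n - j) ((w₂ : ℂ) * x) * altPowerSum d χ j (w₁ * d - 1) =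
      ∑ j ∈ Finset.range (n + 1), (n.choose j : ℂ) * (w₁ : ℂ) ^ j * (w₂ : ℂ) ^ (n - j) *
        genEuler d χ 1 (n - j) ((w₁ : ℂ) * x) * altPowerSum d χ j (w₂ * d - 1) := by
  have hsucc : ∀ {w : ℕ}, Odd w → w * d - 1 + 1 = w * d := fun hw =>
    Nat.sub_add_cancel (Nat.mul_pos hw.pos hd.pos)
  rw [sum_choose_genEuler_altPowerSum χ x (hsucc hw₁),
    sum_choose_genEuler_altPowerSum χ x (hsucc hw₂), symmetrySeries_comm χ hd x hw₁ hw₂]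

theorem symmetry_order_one (d : ℕ) (hd : Odd d) (hd0 : 0 < d)
    (χ : DirichletCharacter ℂ d) (w₁ w₂ : ℕ) (hw₁ : Odd w₁) (hw₁0 : 0 < w₁)
    (hw₂ : Odd w₂) (hw₂0 : 0 < w₂) (n : ℕ) (x : ℂ) :
    ∑ j ∈ Finset.range (n + 1), (n.choose j : ℂ) * (w₂ : ℂ) ^ j * (w₁ : ℂ) ^ (n - j) *
        genEuler d χ 1 (n - j) ((w₂ : ℂ) * x) * altPowerSum d χ j (w₁ * d - 1) =
      ∑ j ∈ Finset.range (n + 1), (n.choose j : ℂ) * (w₁ : ℂ) ^ j * (w₂ : ℂ) ^ (n - j) *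
        genEuler d χ 1 (n - j) ((w₁ : ℂ) * x) * altPowerSum d χ j (w₂ * d - 1) :=
  symmetry_order_one_general d hd χ w₁ w₂ hw₁ hw₂ n x
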